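/- Let (M, ω, J, g) be an almost-Kähler manifold and X a vector field. Then X is holomorphic (i.e. the Lie derivative L_X J = 0) if and only if the J-anti-invariant part of the (2,0)-tensor D^g X satisfies (D^g X)⁻ = -(1/2) D^g_{JX} J (as endomorphisms of TM). -/

import Mathlib

noncomputable section

/-- An abstract model of the vector-field calculus of an almost-Kähler
manifold: `R` plays the role of the ring of smooth functions, `X` of the
module of vector fields, `act` of the derivation action of vector fields on
functions, `bracket` of the Lie bracket, `D` of the Levi-Civita connection,
`J` of the almost-complex structure, `g` of the Riemannian metric and `ω` of
the (closed) symplectic form, with `g(·,·) = ω(·, J·)`. -/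
structure AK (R : Type*) (X : Type*) [CommRing R] [Algebra ℝ R]
    [AddCommGroup X] [Module R X] where
  act : X → R → R
  bracket : X → X → X
  D : X → X → X
  J : X → X
  g : X → X → R
  ω : X → X → R
  act_addx : ∀ x y f, act (x + y) f = act x f + act y f
  act_smulx : ∀ (h : R) (x : X) (f : R), act (h • x) f = h * act x f
  act_addf : ∀ x f h, act x (f + h) = act x f + act x h
  act_deriv : ∀ x f h, act x (f * h) = act x f * h + f * act x h
  act_bracket : ∀ x y f, act (bracket x y) f = act x (act y f) - act y (act x f)
  bracket_antisymm : ∀ x y, bracket x y = - bracket y x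
  g_symm : ∀ x y, g x y = g y x
  g_add₁ : ∀ x y z, g (x + y) z = g x z + g y z
  g_add₂ : ∀ x y z, g x (y + z) = g x y + g x z
  g_smul₁ : ∀ (f : R) x y, g (f • x) y = f * g x y
  g_smul₂ : ∀ (f : R) x y, g x (f • y) = f * g x y
  g_nondeg : ∀ x, (∀ y, g x y = 0) → x = 0
  J_add : ∀ x y, J (x + y) = J x + J y
  J_smul : ∀ (f : R) x, J (f • x) = f • J x
  J_sq : ∀ x, J (J x) = - x
  compat : ∀ x y, g x y = ω x (J y)
  g_Jinv : ∀ x y, g (J x) (J y) = g x y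
  D_add₁ : ∀ x y z, D (x + y) z = D x z + D y z
  D_add₂ : ∀ x y z, D x (y + z) = D x y + D x z
  D_tensor : ∀ (f : R) x y, D (f • x) y = f • D x y
  D_leibniz : ∀ (f : R) x y, D x (f • y) = act x f • y + f • D x y
  D_torsionfree : ∀ x y, D x y - D y x = bracket x y
  D_metric : ∀ x y z, act x (g y z) = g (D x y) z + g y (D x z)
  ω_closed : ∀ x y z,
    act x (ω y z) - act y (ω x z) + act z (ω x y)
      - ω (bracket x y) z + ω (bracket x z) y - ω (bracket y z) x = 0

namespace AK

variable {R : Type*} {X : Type*} [CommRing R] [Algebra ℝ R]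
  [AddCommGroup X] [Module R X] [Module ℝ X] (C : AK R X)

/-- The Nijenhuis tensor `4N(X,Y) = [JX,JY] - [X,Y] - J[JX,Y] - J[X,JY]`. -/
def N (x y : X) : X :=
  (4 : ℝ)⁻¹ • (C.bracket (C.J x) (C.J y) - C.bracket x y
    - C.J (C.bracket (C.J x) y) - C.J (C.bracket x (C.J y)))

/-- The covariant derivative `(D_X J)(Y)` of `J`. -/
def DJ (x y : X) : X := C.D x (C.J y) - C.J (C.D x y)

/-- The Riemann curvature operator `R(X,Y)Z`. -/
def Riem (x y z : X) : X :=
  C.D x (C.D y z) - C.D y (C.D x z) - C.D (C.bracket x y) z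

variable {ι : Type*} [Fintype ι] [DecidableEq ι]

/-- The `*`-Ricci form `ρ* = R(ω)`, computed in the orthonormal frame `e`:
`ρ*(X,Y) = (1/2) ∑ᵢ g(R(X,Y)eᵢ, Jeᵢ)`. -/
def rhoStar (e : ι → X) (x y : X) : R :=
  (2 : ℝ)⁻¹ • ∑ i, C.g (C.Riem x y (e i)) (C.J (e i))

/-- The hermitian Ricci form of the canonical hermitian connection, via
`ρ^∇(X,Y) = ρ*(X,Y) - (1/4) tr(J ∘ D_X J ∘ D_Y J)` (identity (2.10)). -/
def rho (e : ι → X) (x y : X) : R :=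
  C.rhoStar e x y
    - (4 : ℝ)⁻¹ • ∑ i, C.g (C.J (C.DJ x (C.DJ y (e i)))) (e i)

/-- The hermitian scalar curvature `s^∇ = 2Λ_ω ρ^∇ = ∑ᵢ ρ^∇(eᵢ, Jeᵢ)`. -/
def scalH (e : ι → X) : R := ∑ i, C.rho e (e i) (C.J (e i))

/-- The Riemannian Laplacian `Δ f = -tr_g (D df)`. -/
def lap (e : ι → X) (f : R) : R :=
  - ∑ i, (C.act (e i) (C.act (e i) f) - C.act (C.D (e i) (e i)) f)

/-- `e` is a `g`-orthonormal frame of the module of vector fields. -/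
def IsFrame (e : ι → X) : Prop :=
  (∀ i j, C.g (e i) (e j) = if i = j then 1 else 0) ∧
    ∀ x, x = ∑ i, C.g x (e i) • e i

/-- `x` is a Killing vector field: `L_x g = 0`. -/
def Killing (x : X) : Prop :=
  ∀ y z, C.act x (C.g y z) - C.g (C.bracket x y) z - C.g y (C.bracket x z) = 0

/-- `x` is a (pseudo-)holomorphic vector field: `L_x J = 0`. -/
def Holomorphic (x : X) : Prop :=
  ∀ y, C.bracket x (C.J y) = C.J (C.bracket x y)

/-- `x` is hamiltonian with hamiltonian function `f`: `ω(x, ·) = -df`. -/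
def Hamiltonian (x : X) (f : R) : Prop := ∀ y, C.ω x y = - C.act y f

end AK

/-!
On an almost-Kähler manifold the covariant derivative of `J` satisfies `D_{Jx} J = -J ∘ D_x J`.
To see it, put `φ(x,y,z) = g((D_x J)y, z)` and `ψ(x,y,z) = φ(Jx,y,z) - φ(x,Jy,z)`. Metricity of `D`
makes `φ` skew in `y, z`, and `dω = 0` says that the cyclic sum of `φ` vanishes; together they make
`ψ` totally skew. Since `ψ(Jx,Jy,z) = ψ(x,y,z)` while `ψ(x,Jy,Jz) = -ψ(x,y,z)`, total skewness
gives `ψ(x,Jy,Jz) = ψ(y,z,x) = ψ(x,y,z)`, so `ψ = 0`, which is the identity.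

Torsion-freeness gives `L_x J = D_x J - [D x, J]`, so `x` is holomorphic iff
`(D_x J) y = D_{Jy} x - J D_y x`. Applying `J` and substituting `D_x J = J ∘ D_{Jx} J` turns this
into the stated equation for `(D x)⁻`.
-/

lemma eq_zero_of_eq_neg {K M : Type*} [DivisionRing K] [CharZero K] [AddCommGroup M]
    [Module K M] {a : M} (h : a = -a) : a = 0 := by
  have h2 : (2 : K) • a = 0 := by rw [two_smul]; nth_rw 2 [h]; exact add_neg_cancel a
  exact (smul_eq_zero.mp h2).resolve_left two_ne_zero

namespace AK

variable {R : Type*} {X : Type*} [CommRing R] [Algebra ℝ R]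
  [AddCommGroup X] [Module R X] (C : AK R X)

def gₗ : X →ₗ[R] X →ₗ[R] R := LinearMap.mk₂ R C.g C.g_add₁ C.g_smul₁ C.g_add₂ C.g_smul₂

lemma J_neg (a : X) : C.J (-a) = -C.J a := by
  simpa using C.J_smul (-1) a

lemma J_sub (a b : X) : C.J (a - b) = C.J a - C.J b := by
  rw [sub_eq_add_neg, C.J_add, C.J_neg, ← sub_eq_add_neg]

lemma g_neg_left (a b : X) : C.g (-a) b = -C.g a b := LinearMap.map_neg₂ C.gₗ a b

lemma g_neg_right (a b : X) : C.g a (-b) = -C.g a b := (C.gₗ a).map_neg b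

lemma g_sub_left (a b c : X) : C.g (a - b) c = C.g a c - C.g b c := LinearMap.map_sub₂ C.gₗ a b c

lemma D_neg_left (a b : X) : C.D (-a) b = -C.D a b := by
  simpa using C.D_tensor (-1) a b

lemma D_neg_right (a b : X) : C.D a (-b) = -C.D a b :=
  (AddMonoidHom.mk' (C.D a) (C.D_add₂ a)).map_neg b

lemma act_zero (a : X) : C.act a 0 = 0 :=
  (AddMonoidHom.mk' (C.act a) (C.act_addf a)).map_zero

lemma g_J_left (a b : X) : C.g (C.J a) b = -C.g a (C.J b) := by
  simpa [C.J_sq, C.g_neg_left] using (C.g_Jinv (C.J a) b).symm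

lemma g_J_swap (a b : X) : C.g (C.J a) b = -C.g (C.J b) a := by
  rw [C.g_J_left, C.g_symm]

lemma ω_eq_g_J (a b : X) : C.ω a b = C.g (C.J a) b := by
  simpa [C.J_neg, C.J_sq, C.g_neg_right, C.g_J_left] using (C.compat a (-C.J b)).symm

lemma DJ_neg_left (x y : X) : C.DJ (-x) y = -C.DJ x y := by
  simp only [DJ, C.D_neg_left, C.J_neg]
  abel

lemma DJ_neg_right (x y : X) : C.DJ x (-y) = -C.DJ x y := by
  simp only [DJ, C.J_neg, C.D_neg_right]
  abel

lemma DJ_J (x y : X) : C.DJ x (C.J y) = -C.J (C.DJ x y) := by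
  simp only [DJ, C.J_sq, C.D_neg_right, C.J_sub]
  abel

lemma g_DJ_J (x y z : X) : C.g (C.DJ x (C.J y)) z = C.g (C.DJ x y) (C.J z) := by
  rw [C.DJ_J, C.g_neg_left, C.g_J_left, neg_neg]

lemma g_DJ_skew (x y z : X) : C.g (C.DJ x y) z = -C.g (C.DJ x z) y := by
  have hJ : C.g (C.J y) z + C.g (C.J z) y = 0 := by rw [C.g_J_swap y z]; ring
  have hD := congrArg (C.act x) hJ
  rw [C.act_addf, C.act_zero, C.D_metric, C.D_metric] at hD
  simp only [DJ, C.g_sub_left, C.g_J_swap (C.D x y), C.g_J_swap (C.D x z)]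
  linear_combination hD

lemma g_DJ_cyclic (x y z : X) :
    C.g (C.DJ x y) z + C.g (C.DJ y z) x + C.g (C.DJ z x) y = 0 := by
  have hω := C.ω_closed x y z
  simp only [ω_eq_g_J, ← C.D_torsionfree, C.J_sub, C.g_sub_left, C.D_metric,
    C.g_J_swap (C.D _ _)] at hω
  rw [C.g_DJ_skew y z x]
  simp only [DJ, C.g_sub_left, C.g_J_swap (C.D _ _)]
  linear_combination hω

def psi (x y z : X) : R :=
  C.g (C.DJ (C.J x) y) z - C.g (C.DJ x (C.J y)) z

lemma psi_swap_right (x y z : X) : C.psi x y z = -C.psi x z y := by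
  have h1 := C.g_DJ_skew (C.J x) y z
  have h2 := C.g_DJ_J x y z
  have h3 := C.g_DJ_skew x y (C.J z)
  unfold psi
  linear_combination h1 - h2 - h3

lemma psi_swap_left (x y z : X) : C.psi x y z = -C.psi y x z := by
  have c1 := C.g_DJ_cyclic (C.J x) y z
  have c2 := C.g_DJ_cyclic x (C.J y) z
  have s1 := C.g_DJ_skew y z (C.J x)
  have s2 := C.g_DJ_skew (C.J y) z x
  have j := C.g_DJ_J z x y
  unfold psi
  linear_combination c1 - c2 - s1 + s2 - j

lemma psi_cyclic (x y z : X) : C.psi x y z = C.psi y z x := by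
  rw [C.psi_swap_left, C.psi_swap_right, neg_neg]

lemma psi_J_J_left (x y z : X) : C.psi (C.J x) (C.J y) z = C.psi x y z := by
  simp only [psi, C.J_sq, C.DJ_neg_left, C.DJ_neg_right, C.g_neg_left]
  ring

lemma psi_J_J_right (x y z : X) : C.psi x (C.J y) (C.J z) = -C.psi x y z := by
  have h1 := C.g_DJ_J (C.J x) y (C.J z)
  have h2 := C.g_DJ_J x y z
  simp only [psi, C.J_sq, C.DJ_neg_right, C.g_neg_left, C.g_neg_right] at h1 ⊢
  linear_combination h1 - h2

lemma psi_eq_zero (x y z : X) : C.psi x y z = 0 := by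
  refine eq_zero_of_eq_neg (K := ℝ) ?_
  calc C.psi x y z = C.psi y z x := C.psi_cyclic x y z
    _ = C.psi (C.J y) (C.J z) x := (C.psi_J_J_left y z x).symm
    _ = C.psi x (C.J y) (C.J z) := (C.psi_cyclic x (C.J y) (C.J z)).symm
    _ = -C.psi x y z := C.psi_J_J_right x y z

lemma DJ_J_left (x y : X) : C.DJ (C.J x) y = -C.J (C.DJ x y) := by
  refine eq_neg_of_add_eq_zero_left (C.g_nondeg _ fun z => ?_)
  simpa [psi, C.DJ_J, C.g_neg_left, C.g_add₁, sub_eq_add_neg] using C.psi_eq_zero x y z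

lemma bracket_J_sub_J_bracket (x y : X) :
    C.bracket x (C.J y) - C.J (C.bracket x y) = C.DJ x y - (C.D (C.J y) x - C.J (C.D y x)) := by
  rw [← C.D_torsionfree, ← C.D_torsionfree, C.J_sub, DJ]
  abel

lemma holomorphic_iff_DJ (x : X) :
    C.Holomorphic x ↔ ∀ y, C.DJ x y = C.D (C.J y) x - C.J (C.D y x) := by
  refine forall_congr' fun y => ?_
  rw [← sub_eq_zero, C.bracket_J_sub_J_bracket, sub_eq_zero]

lemma eq_J_iff (u v : X) : u = C.J v ↔ v = -C.J u := by
  constructor <;> rintro rfl <;> simp [C.J_neg, C.J_sq]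

end AK

theorem holomorphic_iff_anti_invariant_part_eq_general
    {R : Type*} {X : Type*} [CommRing R] [Algebra ℝ R]
    [AddCommGroup X] [Module R X] [Module ℝ X]
    (C : AK R X) (x : X) :
    C.Holomorphic x ↔
      ∀ y, (2 : ℝ)⁻¹ • (C.D y x + C.J (C.D (C.J y) x))
        = -((2 : ℝ)⁻¹ • C.DJ (C.J x) y) := by
  rw [C.holomorphic_iff_DJ]
  refine forall_congr' fun y => ?_
  rw [C.DJ_J_left, smul_neg, neg_neg, smul_right_inj (inv_ne_zero two_ne_zero), C.eq_J_iff,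
    C.J_add, C.J_sq, neg_add, neg_neg, neg_add_eq_sub]

/-- Lemma 2.2: a vector field `X` on an almost-Kähler manifold is holomorphic
(`L_X J = 0`) if and only if the `J`-anti-invariant part of `D^g X`, namely
`(D^g X)⁻ = (1/2)(D^g X + J ∘ D^g X ∘ J)`, equals `-(1/2) D^g_{JX} J`. -/
theorem holomorphic_iff_anti_invariant_part_eq
    {R : Type*} {X : Type*} [CommRing R] [Algebra ℝ R]
    [AddCommGroup X] [Module R X] [Module ℝ X] [IsScalarTower ℝ R X]
    (C : AK R X) (x : X) :
    C.Holomorphic x ↔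
      ∀ y, (2 : ℝ)⁻¹ • (C.D y x + C.J (C.D (C.J y) x))
        = -((2 : ℝ)⁻¹ • C.DJ (C.J x) y) :=
  holomorphic_iff_anti_invariant_part_eq_general C x
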